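/- Let R be a semisimple artinian ring, I a left ideal, a ∈ R, and suppose Ra + I = Re where e is an idempotent. Then there exist i ∈ I and a unit u ∈ R such that a + i = u·e. -/

import Mathlib

/-!
A semisimple module of finite length cancels: `C × A ≃ C × B` forces `A ≃ B`. Splitting off one
simple summand of `C` at a time reduces this to simple `C`, where it holds because two isomorphic
simple submodules always have a common complement.

Apply this to right multiplication `f = (· * a)` on `R`, with a complement `C` of `ker f` and a
complement `B ⊆ J` of `Ra`: since `C ≃ Ra`, cancellation gives `ker f ≃ B`, and the two
isomorphisms glue to an automorphism `u` of the left module `R` with `u 1 ∈ a + J`, so `R` has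
stable range one. For `J = I + R(1 - e)` we get `Ra + J = Re + R(1 - e) = R`, and multiplying
`a + i + r(1 - e) = u 1` on the right by `e` gives `a + i = u 1 * e`, as `a` and `I` lie in `Re`.
-/

open Submodule LinearMap

theorem exists_le_isCompl_of_codisjoint {α : Type*} [Lattice α] [BoundedOrder α]
    [IsModularLattice α] [ComplementedLattice α] {a b : α} (h : Codisjoint a b) :
    ∃ c ≤ b, IsCompl a c := by
  obtain ⟨c, hc⟩ := exists_isCompl (a ⊓ b)
  refine ⟨c ⊓ b, inf_le_right, ?_, ?_⟩
  · rw [disjoint_iff, ← inf_assoc, inf_right_comm, hc.inf_eq_bot]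
  · have hb : a ⊓ b ⊔ c ⊓ b = b := by
      rw [← sup_inf_assoc_of_le c inf_le_right, hc.sup_eq_top, top_inf_eq]
    rw [codisjoint_iff, eq_top_iff, ← h.eq_top]
    exact sup_le le_sup_left (hb.ge.trans (sup_le_sup_right inf_le_left _))

section Semisimple

variable {R M : Type*} [Ring R] [AddCommGroup M] [Module R M]

instance {N : Type*} [AddCommGroup N] [Module R N] [IsSemisimpleModule R M]
    [IsSemisimpleModule R N] : IsSemisimpleModule R (M × N) := by
  have := IsSemisimpleModule.sup (.range (inl R M N)) (.range (inr R M N))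
  rw [sup_range_inl_inr] at this
  exact .congr Submodule.topEquiv.symm

namespace Submodule

variable [ComplementedLattice (Submodule R M)]

theorem exists_isCompl_isCompl_of_disjoint {S₁ S₂ : Submodule R M} (h : Disjoint S₁ S₂)
    (e : S₁ ≃ₗ[R] S₂) : ∃ U, IsCompl S₁ U ∧ IsCompl S₂ U := by
  -- the graph of `e` is a complement of both `S₁` and `S₂` in `S₁ ⊔ S₂`
  set Δ := range (S₁.subtype + S₂.subtype ∘ₗ e)
  have mem_Δ (y : S₁) : (y : M) + e y ∈ Δ := ⟨y, rfl⟩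
  have hΔ : Δ ≤ S₁ ⊔ S₂ := by
    rintro _ ⟨y, rfl⟩
    exact add_mem_sup y.2 (e y).2
  have h₁ : Disjoint S₁ Δ := by
    rw [disjoint_def]
    rintro _ hx ⟨y, rfl⟩
    have : (e y : M) = 0 := disjoint_def.mp h _ (by simpa using sub_mem hx y.2) (e y).2
    simp_all
  have h₂ : Disjoint S₂ Δ := by
    rw [disjoint_def]
    rintro _ hx ⟨y, rfl⟩
    have : (y : M) = 0 := disjoint_def.mp h _ y.2 (by simpa using sub_mem hx (e y).2)
    simp_all
  have hsup₁ : S₁ ⊔ Δ = S₁ ⊔ S₂ := by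
    refine le_antisymm (sup_le le_sup_left hΔ) (sup_le le_sup_left fun z hz => ?_)
    simpa using sub_mem (mem_sup_right (mem_Δ (e.symm ⟨z, hz⟩)))
      (Submodule.mem_sup_left (T := Δ) (e.symm ⟨z, hz⟩).2)
  have hsup₂ : S₂ ⊔ Δ = S₁ ⊔ S₂ := by
    refine le_antisymm (sup_le le_sup_right hΔ) (sup_le (fun y hy => ?_) le_sup_left)
    simpa using sub_mem (mem_sup_right (mem_Δ ⟨y, hy⟩))
      (Submodule.mem_sup_left (T := Δ) (e ⟨y, hy⟩).2)
  obtain ⟨W, hW⟩ := ComplementedLattice.exists_isCompl (S₁ ⊔ S₂)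
  exact ⟨Δ ⊔ W, h₁.isCompl_sup_right_of_isCompl_sup_left (hsup₁ ▸ hW),
    h₂.isCompl_sup_right_of_isCompl_sup_left (hsup₂ ▸ hW)⟩

theorem exists_isCompl_isCompl_of_isAtom {S₁ S₂ : Submodule R M} (h₁ : IsAtom S₁)
    (e : S₁ ≃ₗ[R] S₂) : ∃ U, IsCompl S₁ U ∧ IsCompl S₂ U := by
  by_cases h : S₁ = S₂
  · subst h
    obtain ⟨U, hU⟩ := ComplementedLattice.exists_isCompl S₁
    exact ⟨U, hU, hU⟩
  have : IsSimpleModule R S₁ := isSimpleModule_iff_isAtom.mpr h₁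
  have h₂ : IsAtom S₂ := isSimpleModule_iff_isAtom.mp (.congr e.symm)
  exact exists_isCompl_isCompl_of_disjoint (h₁.disjoint_of_ne h₂ h) e

theorem nonempty_linearEquiv_of_isAtom {S₁ S₂ A B : Submodule R M} (h₁ : IsAtom S₁)
    (e : S₁ ≃ₗ[R] S₂) (hA : IsCompl S₁ A) (hB : IsCompl S₂ B) : Nonempty (A ≃ₗ[R] B) := by
  obtain ⟨U, hU₁, hU₂⟩ := exists_isCompl_isCompl_of_isAtom h₁ e
  exact ⟨(quotientEquivOfIsCompl S₁ A hA).symm ≪≫ₗ quotientEquivOfIsCompl S₁ U hU₁ ≪≫ₗ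
    (quotientEquivOfIsCompl S₂ U hU₂).symm ≪≫ₗ quotientEquivOfIsCompl S₂ B hB⟩

end Submodule

variable {A B : Type*} [AddCommGroup A] [Module R A] [AddCommGroup B] [Module R B]

theorem nonempty_linearEquiv_of_isSimpleModule_prod [IsSimpleModule R M]
    [IsSemisimpleModule R B] (e : (M × A) ≃ₗ[R] (M × B)) : Nonempty (A ≃ₗ[R] B) := by
  have inj_inl := e.injective.comp (inl_injective : Function.Injective (inl R M A))
  have inj_inr := e.injective.comp (inr_injective : Function.Injective (inr R M A))
  let eM := LinearEquiv.ofInjective (e.toLinearMap ∘ₗ inl R M A) inj_inl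
  have hcompl : IsCompl (range (e.toLinearMap ∘ₗ inl R M A))
      (range (e.toLinearMap ∘ₗ inr R M A)) := by
    rw [range_comp, range_comp]
    exact isCompl_range_inl_inr.map (orderIsoMapComap e)
  have hatom : IsAtom (range (e.toLinearMap ∘ₗ inl R M A)) :=
    isSimpleModule_iff_isAtom.mp (.congr eM.symm)
  obtain ⟨θ⟩ := nonempty_linearEquiv_of_isAtom hatom
    (eM.symm ≪≫ₗ .ofInjective (inl R M B) inl_injective) hcompl isCompl_range_inl_inr
  exact ⟨.ofInjective _ inj_inr ≪≫ₗ θ ≪≫ₗ (LinearEquiv.ofInjective (inr R M B) inr_injective).symm⟩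

theorem IsFiniteLength.nonempty_linearEquiv_of_prod [IsSemisimpleModule R B]
    (hM : IsFiniteLength R M) [hss : IsSemisimpleModule R M] (e : (M × A) ≃ₗ[R] (M × B)) :
    Nonempty (A ≃ₗ[R] B) := by
  induction hM generalizing hss with
  | @of_subsingleton M _ _ _ =>
    have : Unique M := uniqueOfSubsingleton 0
    exact ⟨LinearEquiv.uniqueProd.symm ≪≫ₗ e ≪≫ₗ LinearEquiv.uniqueProd⟩
  | @of_simple_quotient M _ _ N _ _ ih =>
    obtain ⟨Q, hQ⟩ := ComplementedLattice.exists_isCompl N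
    let split : M ≃ₗ[R] (M ⧸ N) × N := (prodEquivOfIsCompl N Q hQ).symm ≪≫ₗ
      LinearEquiv.prodComm R N Q ≪≫ₗ (quotientEquivOfIsCompl N Q hQ).symm.prodCongr (.refl R N)
    obtain ⟨e'⟩ := nonempty_linearEquiv_of_isSimpleModule_prod <|
      (LinearEquiv.prodAssoc R _ _ _).symm ≪≫ₗ split.symm.prodCongr (.refl R A) ≪≫ₗ e ≪≫ₗ
        split.prodCongr (.refl R B) ≪≫ₗ LinearEquiv.prodAssoc R _ _ _
    exact ih e'

theorem Submodule.nonempty_linearEquiv_of_isCompl [IsSemisimpleModule R M] [Module.Finite R M]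
    {C A D B : Submodule R M} (hC : IsCompl C A) (hD : IsCompl D B) (e : C ≃ₗ[R] D) :
    Nonempty (A ≃ₗ[R] B) :=
  (isFiniteLength_iff_isNoetherian_isArtinian.mpr ⟨inferInstance, inferInstance⟩ :
    IsFiniteLength R C).nonempty_linearEquiv_of_prod
    (prodEquivOfIsCompl C A hC ≪≫ₗ (prodEquivOfIsCompl D B hD).symm ≪≫ₗ
      e.symm.prodCongr (.refl R B))

theorem LinearMap.exists_linearEquiv_sub_mem [IsSemisimpleModule R M] [Module.Finite R M]
    (f : Module.End R M) {J : Submodule R M} (h : Codisjoint (range f) J) :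
    ∃ u : M ≃ₗ[R] M, ∀ x, u x - f x ∈ J := by
  obtain ⟨C, hC⟩ := ComplementedLattice.exists_isCompl (ker f)
  obtain ⟨B, hBJ, hB⟩ := exists_le_isCompl_of_codisjoint h
  let eC : C ≃ₗ[R] range f := (quotientEquivOfIsCompl _ _ hC).symm ≪≫ₗ f.quotKerEquivRange
  obtain ⟨θ⟩ := nonempty_linearEquiv_of_isCompl hC.symm hB eC
  refine ⟨(prodEquivOfIsCompl _ _ hC).symm ≪≫ₗ θ.prodCongr eC ≪≫ₗ prodEquivOfIsCompl _ _ hB.symm,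
    fun x => hBJ ?_⟩
  have hfx : f x = f (C.projection (ker f) hC.symm x) := by
    rw [projection_eq_self_sub_projection hC, map_sub, mem_ker.mp (projection_apply_mem hC x),
      sub_zero]
  simp [eC, hfx]

theorem LinearEquiv.isUnit_apply_one (u : R ≃ₗ[R] R) : IsUnit (u 1) :=
  isUnit_op.mp (((Module.End.isUnit_iff _).mpr u.bijective).map (RingEquiv.moduleEndSelf R).symm)

theorem IsSemisimpleRing.exists_mem_isUnit_add [IsSemisimpleRing R] {J : Ideal R} {a : R}
    (h : Ideal.span {a} ⊔ J = ⊤) : ∃ j ∈ J, IsUnit (a + j) := by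
  obtain ⟨u, hu⟩ := (toSpanSingleton R R a).exists_linearEquiv_sub_mem
    (by rwa [range_toSpanSingleton, codisjoint_iff])
  exact ⟨u 1 - a, by simpa using hu 1, by simpa using u.isUnit_apply_one⟩

end Semisimple

/-- Let `R` be a semisimple artinian ring, `I` a left ideal, `a ∈ R`,
and suppose `Ra + I = Re` where `e` is an idempotent. Then there exist `i ∈ I` and a
unit `u ∈ R` such that `a + i = u·e`. -/
theorem coset_unit_mul_idempotent {R : Type*} [Ring R] [IsSemisimpleRing R]
    (I : Ideal R) (a e : R) (he : e * e = e)
    (h : Ideal.span {a} ⊔ I = Ideal.span {e}) :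
    ∃ i ∈ I, ∃ u : Rˣ, a + i = (u : R) * e := by
  have mul_e {x : R} (hx : x ∈ Ideal.span {e}) : x * e = x := by
    obtain ⟨r, rfl⟩ := Ideal.mem_span_singleton'.mp hx
    rw [mul_assoc, he]
  have hI : I ≤ Ideal.span {e} := h ▸ le_sup_right
  have ha : a ∈ Ideal.span {e} := h ▸ Ideal.mem_sup_left (Ideal.mem_span_singleton_self a)
  have hsup : Ideal.span {a} ⊔ (I ⊔ Ideal.span {1 - e}) = ⊤ := by
    rw [← sup_assoc, h, Ideal.eq_top_iff_one]
    simpa using Submodule.add_mem_sup (Ideal.mem_span_singleton_self e)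
      (Ideal.mem_span_singleton_self (1 - e))
  obtain ⟨j, hj, u, hu⟩ := IsSemisimpleRing.exists_mem_isUnit_add hsup
  obtain ⟨i, hi, _, hr, rfl⟩ := Submodule.mem_sup.mp hj
  obtain ⟨r, rfl⟩ := Ideal.mem_span_singleton'.mp hr
  refine ⟨i, hi, u, ?_⟩
  rw [hu, add_mul, add_mul, mul_e ha, mul_e (hI hi), mul_assoc, sub_mul, one_mul, he, sub_self,
    mul_zero, add_zero]
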